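/- Under Assumption that A has L_p-Lipschitz p-th derivatives and is (1/λ_k)-strongly convex (A = A_{λ_k}(·; x_g^k)), with M ≥ L_p and σ ∈ (0,1), the number of iterations T^k until the Tensor Extragradient Method terminates with ‖∇A(x^{t+1/2})‖ ≤ σ λ_k^{-1}‖x^{t+1/2} − x^{0}‖ satisfies T^k ≤ (λ_k C_p(M,σ) ‖x_g^k − x^{k,*}‖^{p−1})^{2/p} + 1, where C_p(M,σ) = p^p M^p (1+σ^{-1}) / (p! (pM − L_p)^{p/2}(pM + L_p)^{p/2−1}). -/

import Mathlib

/-!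
Write `r_t = ‖x^{t+1/2} - x^t‖` and `c_t = M r_t^{p-1} / (p-1)!`, the inverse step size.
Stationarity of the regularised Taylor model at `x^{t+1/2}`, together with the Taylor remainder
bound for `∇A` (whose `(p-1)`-th derivative is `L`-Lipschitz), gives
`‖∇A(x^{t+1/2}) - c_t (x^t - x^{t+1/2})‖ ≤ L r_t^p / p!`.
Hence the extragradient step lands within `(L / (pM)) r_t` of `x^{t+1/2}`, and as
`⟪∇A(x^{t+1/2}), x^{t+1/2} - x*⟫ ≥ 0` by strong convexity, the three-point identity yields the
descent `‖x^{t+1} - x*‖² ≤ ‖x^t - x*‖² - (1 - (L / (pM))²) r_t²`.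
Before termination, strong convexity and the failed stopping test bound `‖∇A(x^{t+1/2})‖` below
by a multiple of `‖x^0 - x*‖`, while the same estimate bounds it above by `(pM + L) r_t^p / p!`;
so every `r_t²` is bounded below, and summing the descent inequalities bounds the number of
iterations.
-/

open Finset

/-- The `p`-th order Taylor polynomial of `A` at `z`, evaluated at `x`. -/
noncomputable def taylorApprox {d : ℕ} (p : ℕ) (A : EuclideanSpace ℝ (Fin d) → ℝ)
    (z x : EuclideanSpace ℝ (Fin d)) : ℝ :=
  ∑ i ∈ Finset.range (p + 1),
    (1 / (Nat.factorial i : ℝ)) * iteratedFDeriv ℝ i A z (fun _ => x - z)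

open Nat

open scoped RealInnerProductSpace

universe u

theorem integral_one_sub_pow (n : ℕ) : ∫ t in (0 : ℝ)..1, (1 - t) ^ n = ((n : ℝ) + 1)⁻¹ := by
  rw [intervalIntegral.integral_comp_sub_left (fun s => s ^ n) 1]
  simp [integral_pow]

theorem integral_one_sub_pow_mul (n : ℕ) :
    ∫ t in (0 : ℝ)..1, (1 - t) ^ n * t = (((n : ℝ) + 1) * ((n : ℝ) + 2))⁻¹ := by
  have hsplit : ∫ t in (0 : ℝ)..1, (1 - t) ^ n * t =
      ∫ t in (0 : ℝ)..1, ((1 - t) ^ n - (1 - t) ^ (n + 1)) := by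
    congr 1
    ext t
    ring
  rw [hsplit, intervalIntegral.integral_comp_sub_left (fun s => s ^ n - s ^ (n + 1)) 1,
    intervalIntegral.integral_sub (by simp) (by simp)]
  simp [integral_pow]
  field_simp
  ring

section IteratedFDeriv

variable {E F : Type u} [NormedAddCommGroup E] [NormedSpace ℝ E] [NormedAddCommGroup F]
  [NormedSpace ℝ F]

theorem iteratedFDeriv_fderiv_fderiv_apply_comm {n : ℕ} {f : E → F}
    (hf : ContDiff ℝ (n + 2) f) (x : E) (m : Fin n → E) (u v : E) :
    iteratedFDeriv ℝ n (fderiv ℝ (fderiv ℝ f)) x m u v =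
      iteratedFDeriv ℝ n (fderiv ℝ (fderiv ℝ f)) x m v u := by
  have hf'' : ContDiff ℝ n (fderiv ℝ (fderiv ℝ f)) :=
    (hf.fderiv_right (m := n + 1) (by norm_cast)).fderiv_right (by norm_cast)
  have happly : ∀ a b : E, iteratedFDeriv ℝ n (fun y => fderiv ℝ (fderiv ℝ f) y a b) x m =
      iteratedFDeriv ℝ n (fderiv ℝ (fderiv ℝ f)) x m a b := fun a b => by
    rw [iteratedFDeriv_clm_apply_const_apply (hf''.clm_apply contDiff_const) le_rfl,
      iteratedFDeriv_clm_apply_const_apply hf'' le_rfl]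
  have hsymm : (fun y => fderiv ℝ (fderiv ℝ f) y u v) = fun y => fderiv ℝ (fderiv ℝ f) y v u :=
    funext fun y => ((hf.contDiffAt (x := y)).isSymmSndFDerivAt (by simp)).eq u v
  rw [← happly, hsymm, happly]

theorem hasFDerivAt_iteratedFDeriv_succ_const (n : ℕ) {f : E → F} (hf : ContDiff ℝ (n + 1) f)
    (x w : E) :
    HasFDerivAt (fun y => iteratedFDeriv ℝ (n + 1) f x (fun _ => y))
      (((n : ℝ) + 1) • iteratedFDeriv ℝ n (fderiv ℝ f) x (fun _ => w)) w := by
  have hsplit : ∀ (k : ℕ) {G : Type u} [NormedAddCommGroup G] [NormedSpace ℝ G] (g : E → G)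
      (y : E), iteratedFDeriv ℝ (k + 1) g x (fun _ => y) =
        iteratedFDeriv ℝ k (fderiv ℝ g) x (fun _ => y) y :=
    fun k _ _ _ g y => iteratedFDeriv_succ_apply_right _
  induction n generalizing F with
  | zero =>
    simp only [hsplit, iteratedFDeriv_zero_apply, CharP.cast_eq_zero, zero_add, one_smul]
    exact (fderiv ℝ f x).hasFDerivAt
  | succ n ih =>
    have hf' : ContDiff ℝ (n + 1) (fderiv ℝ f) := hf.fderiv_right (by norm_cast)
    simp_rw [hsplit (n + 1)]
    convert (ih hf').clm_apply (hasFDerivAt_id w) using 1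
    · rfl
    ext h
    simp only [cast_add, cast_one, smul_apply, ContinuousLinearMap.comp_id,
      ContinuousLinearMap.flip_smul, id_eq, add_apply, ContinuousLinearMap.flip_apply]
    rw [iteratedFDeriv_fderiv_fderiv_apply_comm (by exact_mod_cast hf), ← hsplit n]
    simp only [add_smul, one_smul]
    abel

theorem norm_iteratedFDeriv_fderiv_sub (n : ℕ) (f : E → F) (y z : E) :
    ‖iteratedFDeriv ℝ n (fderiv ℝ f) y - iteratedFDeriv ℝ n (fderiv ℝ f) z‖ =
      ‖iteratedFDeriv ℝ (n + 1) f y - iteratedFDeriv ℝ (n + 1) f z‖ := by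
  rw [iteratedFDeriv_succ_eq_comp_right, iteratedFDeriv_succ_eq_comp_right, Function.comp_apply,
    Function.comp_apply, ← LinearIsometryEquiv.map_sub, LinearIsometryEquiv.norm_map]

theorem map_add_sub_sum_iteratedFDeriv_eq_integral [CompleteSpace F] {n : ℕ} {f : E → F}
    (hf : ContDiff ℝ (n + 1) f) (x y : E) :
    f (x + y) - ∑ k ∈ range (n + 2), (k ! : ℝ)⁻¹ • iteratedFDeriv ℝ k f x (fun _ => y) =
      (n ! : ℝ)⁻¹ • ∫ t in (0 : ℝ)..1, (1 - t) ^ n •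
        (iteratedFDeriv ℝ (n + 1) f (x + t • y) - iteratedFDeriv ℝ (n + 1) f x) (fun _ => y) := by
  have hcont : Continuous fun t : ℝ => iteratedFDeriv ℝ (n + 1) f (x + t • y) (fun _ => y) :=
    (continuous_eval_const _).comp ((hf.continuous_iteratedFDeriv le_rfl).comp (by fun_prop))
  have hconst : ∫ t in (0 : ℝ)..1, (1 - t) ^ n • iteratedFDeriv ℝ (n + 1) f x (fun _ => y) =
      ((n : ℝ) + 1)⁻¹ • iteratedFDeriv ℝ (n + 1) f x (fun _ => y) := by
    rw [intervalIntegral.integral_smul_const, integral_one_sub_pow]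
  simp_rw [sub_apply, smul_sub]
  rw [intervalIntegral.integral_sub ((by fun_prop : Continuous _).intervalIntegrable 0 1)
      ((by fun_prop : Continuous _).intervalIntegrable 0 1), hconst,
    map_add_eq_sum_add_integral_iteratedFDeriv (fun _ _ => hf.contDiffAt),
    sum_range_succ _ (n + 1)]
  simp only [factorial_succ, cast_mul, mul_inv, cast_succ]
  module

theorem norm_map_add_sub_sum_iteratedFDeriv_le [CompleteSpace F] {n : ℕ} {f : E → F}
    (hf : ContDiff ℝ (n + 1) f) {K : ℝ}
    (hK : ∀ y z, ‖iteratedFDeriv ℝ (n + 1) f y - iteratedFDeriv ℝ (n + 1) f z‖ ≤ K * ‖y - z‖)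
    (x y : E) :
    ‖f (x + y) - ∑ k ∈ range (n + 2), (k ! : ℝ)⁻¹ • iteratedFDeriv ℝ k f x (fun _ => y)‖ ≤
      K / (n + 2)! * ‖y‖ ^ (n + 2) := by
  have hbound : ∀ t ∈ Set.Ioc (0 : ℝ) 1, ‖(1 - t) ^ n •
      (iteratedFDeriv ℝ (n + 1) f (x + t • y) - iteratedFDeriv ℝ (n + 1) f x) (fun _ => y)‖ ≤
        (1 - t) ^ n * t * (K * ‖y‖ ^ (n + 2)) := by
    intro t ht
    have h1t : 0 ≤ (1 - t) ^ n := pow_nonneg (sub_nonneg.2 ht.2) n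
    rw [norm_smul, Real.norm_of_nonneg h1t, mul_assoc]
    refine mul_le_mul_of_nonneg_left ?_ h1t
    calc _ ≤ ‖iteratedFDeriv ℝ (n + 1) f (x + t • y) - iteratedFDeriv ℝ (n + 1) f x‖ *
          ∏ _ : Fin (n + 1), ‖y‖ := ContinuousMultilinearMap.le_opNorm _ _
      _ ≤ K * ‖t • y‖ * ∏ _ : Fin (n + 1), ‖y‖ := by
        gcongr
        simpa using hK (x + t • y) x
      _ = t * (K * ‖y‖ ^ (n + 2)) := by
        rw [norm_smul, Real.norm_of_nonneg ht.1.le, prod_const, Finset.card_univ,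
          Fintype.card_fin]
        ring
  rw [map_add_sub_sum_iteratedFDeriv_eq_integral hf, norm_smul,
    Real.norm_of_nonneg (by positivity)]
  calc _ ≤ (n ! : ℝ)⁻¹ * ∫ t in (0 : ℝ)..1, (1 - t) ^ n * t * (K * ‖y‖ ^ (n + 2)) := by
        gcongr
        exact intervalIntegral.norm_integral_le_of_norm_le zero_le_one (.of_forall hbound)
          ((by fun_prop : Continuous _).intervalIntegrable 0 1)
    _ = K / (n + 2)! * ‖y‖ ^ (n + 2) := by
        rw [intervalIntegral.integral_mul_const, integral_one_sub_pow_mul, factorial_succ,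
          factorial_succ]
        push_cast
        field_simp
        ring

end IteratedFDeriv

theorem lt_norm_of_stopping_test_fails {G : Type*} [SeminormedAddCommGroup G] {g w x₀ xs : G}
    {lam σ : ℝ} (hlam : 0 < lam) (hσ : 0 < σ) (hstrong : lam⁻¹ * ‖w - xs‖ ≤ ‖g‖)
    (hfail : σ * lam⁻¹ * ‖w - x₀‖ < ‖g‖) :
    σ * ‖x₀ - xs‖ / (lam * (1 + σ)) < ‖g‖ := by
  have h1 : σ * ‖w - x₀‖ < lam * ‖g‖ :=
    calc σ * ‖w - x₀‖ = lam * (σ * lam⁻¹ * ‖w - x₀‖) := by field_simp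
      _ < lam * ‖g‖ := mul_lt_mul_of_pos_left hfail hlam
  have h2 : ‖w - xs‖ ≤ lam * ‖g‖ :=
    calc ‖w - xs‖ = lam * (lam⁻¹ * ‖w - xs‖) := by field_simp
      _ ≤ lam * ‖g‖ := mul_le_mul_of_nonneg_left hstrong hlam.le
  have htri : ‖x₀ - xs‖ ≤ ‖w - x₀‖ + ‖w - xs‖ := by
    rw [norm_sub_rev w x₀]
    exact norm_sub_le_norm_sub_add_norm_sub _ _ _
  rw [div_lt_iff₀ (by positivity)]
  nlinarith

section InnerProductSpace

variable {E : Type*} [NormedAddCommGroup E] [InnerProductSpace ℝ E]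

theorem hasFDerivAt_norm_sub_pow (n : ℕ) (x w : E) :
    HasFDerivAt (fun y => ‖y - x‖ ^ (n + 2))
      ((((n : ℝ) + 2) * ‖w - x‖ ^ n) • innerSL ℝ (w - x)) w := by
  have h := (hasFDerivAt_norm_rpow (w - x) (p := n + 2)
    (by linarith [(n.cast_nonneg : (0 : ℝ) ≤ n)])).comp w ((hasFDerivAt_id w).sub_const x)
  have hpow : ∀ v : E, ‖v‖ ^ ((n : ℝ) + 2) = ‖v‖ ^ (n + 2) := fun v => by
    exact_mod_cast Real.rpow_natCast ‖v‖ (n + 2)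
  simpa only [Function.comp_def, id, hpow, add_sub_cancel_right, Real.rpow_natCast,
    ContinuousLinearMap.comp_id] using h

theorem StrongConvexOn.add_sq_le_of_hasFDerivAt {m : ℝ} {f : E → ℝ} {f' : E →L[ℝ] ℝ} {z : E}
    (hf : StrongConvexOn Set.univ m f) (hd : HasFDerivAt f f' z) (y : E) :
    f z + f' (y - z) + m / 2 * ‖y - z‖ ^ 2 ≤ f y := by
  set g : E → ℝ := fun x => f x - m / 2 * ‖x‖ ^ 2
  set ℓ : ℝ →ᵃ[ℝ] E := AffineMap.lineMap z y
  have hconv : ConvexOn ℝ Set.univ (g ∘ ℓ) := (strongConvexOn_iff_convex.1 hf).comp_affineMap ℓ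
  have hℓ : HasDerivAt ℓ (y - z) 0 := AffineMap.hasDerivAt_lineMap
  have hℓ0 : ℓ 0 = z := AffineMap.lineMap_apply_zero z y
  have hderiv : HasDerivAt (g ∘ ℓ) (f' (y - z) - m / 2 * (2 * ⟪z, y - z⟫)) 0 := by
    have h2 := hℓ.norm_sq
    rw [hℓ0] at h2
    exact ((hℓ0 ▸ hd).comp_hasDerivAt (0 : ℝ) hℓ).sub (h2.const_mul (m / 2))
  have hslope := hconv.le_slope_of_hasDerivAt (Set.mem_univ 0) (Set.mem_univ 1) zero_lt_one hderiv
  simp only [slope, Function.comp_apply, vsub_eq_sub, sub_zero, inv_one, one_smul, g, ℓ,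
    AffineMap.lineMap_apply_zero, AffineMap.lineMap_apply_one] at hslope
  have hexpand : ‖y‖ ^ 2 = ‖z‖ ^ 2 + 2 * ⟪z, y - z⟫ + ‖y - z‖ ^ 2 := by
    rw [← norm_add_sq_real, add_sub_cancel]
  rw [hexpand] at hslope
  linarith

theorem StrongConvexOn.mul_sq_norm_sub_le_inner_gradient [CompleteSpace E] {m : ℝ} {f : E → ℝ}
    (hf : StrongConvexOn Set.univ m f) (hd : Differentiable ℝ f) {xs : E}
    (hmin : IsMinOn f Set.univ xs) (w : E) :
    m * ‖w - xs‖ ^ 2 ≤ ⟪gradient f w, w - xs⟫ := by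
  have hzero : fderiv ℝ f xs = 0 := (hmin.isLocalMin Filter.univ_mem).fderiv_eq_zero
  have h1 := hf.add_sq_le_of_hasFDerivAt (hd w).hasFDerivAt xs
  have h2 := hf.add_sq_le_of_hasFDerivAt (hd xs).hasFDerivAt w
  rw [hzero, zero_apply] at h2
  rw [← neg_sub w xs, map_neg, norm_neg] at h1
  rw [inner_gradient_left]
  linarith

theorem StrongConvexOn.mul_norm_sub_le_norm_gradient [CompleteSpace E] {m : ℝ} {f : E → ℝ}
    (hf : StrongConvexOn Set.univ m f) (hd : Differentiable ℝ f) {xs : E}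
    (hmin : IsMinOn f Set.univ xs) (w : E) :
    m * ‖w - xs‖ ≤ ‖gradient f w‖ := by
  rcases (norm_nonneg (w - xs)).eq_or_lt with h0 | hpos
  · rw [← h0, mul_zero]
    exact norm_nonneg _
  · refine le_of_mul_le_mul_right ?_ hpos
    calc m * ‖w - xs‖ * ‖w - xs‖ = m * ‖w - xs‖ ^ 2 := by ring
      _ ≤ ⟪gradient f w, w - xs⟫ := hf.mul_sq_norm_sub_le_inner_gradient hd hmin w
      _ ≤ ‖gradient f w‖ * ‖w - xs‖ := real_inner_le_norm _ _

theorem norm_sub_sq_le_of_extragradient_step {x w u g : E} {c ε : ℝ} (hc : 0 < c)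
    (hg : ‖g - c • (x - w)‖ ≤ ε) (hmono : 0 ≤ ⟪g, w - u⟫) :
    ‖x - c⁻¹ • g - u‖ ^ 2 ≤ ‖x - u‖ ^ 2 - ‖w - x‖ ^ 2 + (ε / c) ^ 2 := by
  have hcorr : w - (x - c⁻¹ • g) = c⁻¹ • (g - c • (x - w)) := by
    rw [smul_sub, smul_smul, inv_mul_cancel₀ hc.ne', one_smul]
    abel
  have hcorr_le : ‖w - (x - c⁻¹ • g)‖ ≤ ε / c := by
    rw [hcorr, norm_smul, Real.norm_of_nonneg (inv_nonneg.2 hc.le), inv_mul_eq_div]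
    gcongr
  have hthree_point : ‖x - c⁻¹ • g - u‖ ^ 2 =
      ‖x - u‖ ^ 2 - ‖w - x‖ ^ 2 + ‖w - (x - c⁻¹ • g)‖ ^ 2 - 2 * c⁻¹ * ⟪g, w - u⟫ := by
    have e1 : x - c⁻¹ • g - u = (x - u) - c⁻¹ • g := by abel
    have e2 : w - (x - c⁻¹ • g) = (w - x) + c⁻¹ • g := by abel
    have e3 : w - u = (w - x) + (x - u) := by abel
    rw [e1, e2, e3, norm_sub_sq_real, norm_add_sq_real, inner_add_right, real_inner_smul_right,
      real_inner_smul_right, real_inner_comm g, real_inner_comm g]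
    ring
  have hsq : ‖w - (x - c⁻¹ • g)‖ ^ 2 ≤ (ε / c) ^ 2 := pow_le_pow_left₀ (norm_nonneg _) hcorr_le 2
  have hinner : 0 ≤ 2 * c⁻¹ * ⟪g, w - u⟫ := by positivity
  linarith

theorem norm_le_of_norm_sub_smul_le {p : ℕ} (hp : 1 ≤ p) {M L : ℝ} (hM : 0 ≤ M) {x w g : E}
    (hg : ‖g - (M / ((p - 1)! : ℝ) * ‖w - x‖ ^ (p - 1)) • (x - w)‖ ≤
      L / (p ! : ℝ) * ‖w - x‖ ^ p) :
    ‖g‖ ≤ (p * M + L) / (p ! : ℝ) * ‖w - x‖ ^ p := by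
  obtain ⟨q, rfl⟩ : ∃ q, p = q + 1 := ⟨p - 1, by omega⟩
  rw [show q + 1 - 1 = q from rfl] at hg
  have hc : ‖(M / (q ! : ℝ) * ‖w - x‖ ^ q) • (x - w)‖ =
      ((q + 1 : ℕ) : ℝ) * M / ((q + 1)! : ℝ) * ‖w - x‖ ^ (q + 1) := by
    rw [norm_smul, Real.norm_of_nonneg (by positivity), norm_sub_rev, factorial_succ, pow_succ]
    push_cast
    field_simp
  have htri := norm_sub_norm_le g ((M / (q ! : ℝ) * ‖w - x‖ ^ q) • (x - w))
  rw [hc] at htri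
  rw [add_div, add_mul]
  linarith

theorem sq_le_sub_of_tensor_step {p : ℕ} (hp : 1 ≤ p) {M L : ℝ} (hM : 0 < M) {x w u g : E}
    (hg : ‖g - (M / ((p - 1)! : ℝ) * ‖w - x‖ ^ (p - 1)) • (x - w)‖ ≤
      L / (p ! : ℝ) * ‖w - x‖ ^ p)
    (hmono : 0 ≤ ⟪g, w - u⟫) :
    (1 - (L / (p * M)) ^ 2) * ‖w - x‖ ^ 2 ≤
      ‖x - u‖ ^ 2 - ‖x - (M / ((p - 1)! : ℝ) * ‖w - x‖ ^ (p - 1))⁻¹ • g - u‖ ^ 2 := by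
  rcases (norm_nonneg (w - x)).eq_or_lt with h0 | hr
  · have hxw : x - w = 0 := by rw [← norm_eq_zero, norm_sub_rev, ← h0]
    rw [← h0, (zero_pow (by omega) : (0 : ℝ) ^ p = 0), mul_zero, hxw, smul_zero, sub_zero, norm_le_zero_iff] at hg
    simp [hg, ← h0]
  have hc : 0 < M / ((p - 1)! : ℝ) * ‖w - x‖ ^ (p - 1) := by positivity
  have hratio : L / (p ! : ℝ) * ‖w - x‖ ^ p / (M / ((p - 1)! : ℝ) * ‖w - x‖ ^ (p - 1)) =
      L / (p * M) * ‖w - x‖ := by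
    obtain ⟨q, rfl⟩ : ∃ q, p = q + 1 := ⟨p - 1, by omega⟩
    rw [show q + 1 - 1 = q from rfl, factorial_succ, pow_succ]
    push_cast
    field_simp
  have hstep := norm_sub_sq_le_of_extragradient_step hc hg hmono
  rw [hratio] at hstep
  linarith

theorem lt_norm_sub_pow_of_stopping_test_fails {p : ℕ} (hp : 1 ≤ p) {M L lam σ : ℝ}
    (hM : 0 ≤ M) (hL : 0 < L) (hlam : 0 < lam) (hσ : 0 < σ) {x w g x₀ xs : E}
    (hg : ‖g - (M / ((p - 1)! : ℝ) * ‖w - x‖ ^ (p - 1)) • (x - w)‖ ≤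
      L / (p ! : ℝ) * ‖w - x‖ ^ p)
    (hstrong : lam⁻¹ * ‖w - xs‖ ≤ ‖g‖) (hfail : σ * lam⁻¹ * ‖w - x₀‖ < ‖g‖) :
    p ! * σ * ‖x₀ - xs‖ / (lam * (1 + σ) * (p * M + L)) < ‖w - x‖ ^ p :=
  calc p ! * σ * ‖x₀ - xs‖ / (lam * (1 + σ) * (p * M + L))
      = p ! / (p * M + L) * (σ * ‖x₀ - xs‖ / (lam * (1 + σ))) := by field_simp
    _ < p ! / (p * M + L) * ((p * M + L) / p ! * ‖w - x‖ ^ p) :=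
      mul_lt_mul_of_pos_left ((lt_norm_of_stopping_test_fails hlam hσ hstrong hfail).trans_le
        (norm_le_of_norm_sub_smul_le hp hM hg)) (by positivity)
    _ = ‖w - x‖ ^ p := by field_simp

end InnerProductSpace

theorem hasFDerivAt_taylorApprox {d p : ℕ} {A : EuclideanSpace ℝ (Fin d) → ℝ}
    (hA : ContDiff ℝ (p : ℕ∞) A) (z w : EuclideanSpace ℝ (Fin d)) :
    HasFDerivAt (taylorApprox p A z)
      (∑ i ∈ range p, (i ! : ℝ)⁻¹ • iteratedFDeriv ℝ i (fderiv ℝ A) z (fun _ => w - z)) w := by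
  have hterm : ∀ i ∈ range p, HasFDerivAt
      (fun y => 1 / ((i + 1)! : ℝ) * iteratedFDeriv ℝ (i + 1) A z (fun _ => y - z))
      ((i ! : ℝ)⁻¹ • iteratedFDeriv ℝ i (fderiv ℝ A) z (fun _ => w - z)) w := by
    intro i hi
    have hAi : ContDiff ℝ (i + 1) A := hA.of_le (by exact_mod_cast mem_range.1 hi)
    have h := ((hasFDerivAt_iteratedFDeriv_succ_const i hAi z (w - z)).comp w
      ((hasFDerivAt_id w).sub_const z)).const_mul (1 / ((i + 1)! : ℝ))
    refine h.congr_fderiv ?_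
    rw [ContinuousLinearMap.comp_id, smul_smul, factorial_succ]
    congr 1
    push_cast
    field_simp
  have hsplit : taylorApprox p A z = (fun _ => A z) + fun y =>
      ∑ i ∈ range p, 1 / ((i + 1)! : ℝ) * iteratedFDeriv ℝ (i + 1) A z (fun _ => y - z) := by
    funext y
    simp [taylorApprox, sum_range_succ', add_comm]
  rw [hsplit, ← zero_add (∑ i ∈ range p, _)]
  exact (hasFDerivAt_const (A z) w).add (HasFDerivAt.fun_sum hterm)

theorem norm_gradient_sub_smul_le_of_isMinOn_taylorApprox {d p : ℕ} (hp : 2 ≤ p)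
    {A : EuclideanSpace ℝ (Fin d) → ℝ} (hA : ContDiff ℝ (p : ℕ∞) A) {L M : ℝ}
    (hLip : ∀ x y, ‖iteratedFDeriv ℝ p A x - iteratedFDeriv ℝ p A y‖ ≤ L * ‖x - y‖)
    {x w : EuclideanSpace ℝ (Fin d)}
    (hw : IsMinOn (fun y => taylorApprox p A x y +
      ((p : ℝ) * M / ((p + 1)! : ℝ)) * ‖y - x‖ ^ (p + 1)) Set.univ w) :
    ‖gradient A w - (M / ((p - 1)! : ℝ) * ‖w - x‖ ^ (p - 1)) • (x - w)‖ ≤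
      L / (p ! : ℝ) * ‖w - x‖ ^ p := by
  obtain ⟨q, rfl⟩ : ∃ q, p = q + 2 := ⟨p - 2, by omega⟩
  set c := M / ((q + 2 - 1)! : ℝ) * ‖w - x‖ ^ (q + 2 - 1)
  set TD := ∑ i ∈ range (q + 2),
    (i ! : ℝ)⁻¹ • iteratedFDeriv ℝ i (fderiv ℝ A) x (fun _ => w - x)
  have hstationary : TD + c • innerSL ℝ (w - x) = 0 := by
    have hreg := (hasFDerivAt_norm_sub_pow (q + 1) x w).const_mul
      (((q + 2 : ℕ) : ℝ) * M / ((q + 2 + 1)! : ℝ))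
    rw [← (hw.isLocalMin Filter.univ_mem).hasFDerivAt_eq_zero
      ((hasFDerivAt_taylorApprox hA x w).add hreg), smul_smul]
    congr 2
    simp only [c, show q + 2 - 1 = q + 1 from rfl, factorial_succ]
    push_cast
    field_simp
    ring
  have hremainder : ‖fderiv ℝ A w - TD‖ ≤ L / (q + 2)! * ‖w - x‖ ^ (q + 2) := by
    have hA' : ContDiff ℝ (q + 1) (fderiv ℝ A) := hA.fderiv_right (by norm_cast)
    simpa using norm_map_add_sub_sum_iteratedFDeriv_le hA'
      (fun y z => (norm_iteratedFDeriv_fderiv_sub _ _ y z).trans_le (hLip y z)) x (w - x)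
  have hdual : InnerProductSpace.toDual ℝ _ (gradient A w - c • (x - w)) =
      fderiv ℝ A w - TD := by
    rw [eq_neg_of_add_eq_zero_left hstationary, sub_neg_eq_add]
    ext v
    simp only [map_sub, toDual_gradient, map_smul, sub_apply, smul_apply,
      InnerProductSpace.toDual_apply_apply, smul_eq_mul, add_apply, coe_innerSL_apply]
    ring
  rwa [← (InnerProductSpace.toDual ℝ _).norm_map, hdual]

theorem pow_rpow_two_div_natCast {r : ℝ} (hr : 0 ≤ r) {p : ℕ} (hp : p ≠ 0) :
    (r ^ p) ^ (2 / p : ℝ) = r ^ 2 := by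
  rw [← Real.rpow_natCast r p, ← Real.rpow_mul hr, mul_div_cancel₀ _ (by exact_mod_cast hp)]
  exact_mod_cast Real.rpow_natCast r 2

theorem natCast_le_of_telescoping {N p : ℕ} (hp : p ≠ 0) {r a : ℕ → ℝ} {κ β X : ℝ}
    (hκ : 0 < κ) (hβ : 0 ≤ β) (hX : 0 ≤ X) (hr0 : ∀ t, 0 ≤ r t) (hr : ∀ t < N, β < r t ^ p)
    (hdesc : ∀ t < N, κ * r t ^ 2 ≤ a t - a (t + 1)) (haN : 0 ≤ a N)
    (hX_eq : κ * β ^ (2 / p : ℝ) * X = a 0) : (N : ℝ) ≤ X := by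
  rcases N.eq_zero_or_pos with rfl | hN
  · simpa using hX
  have hsq : ∀ t ∈ range N, β ^ (2 / p : ℝ) < r t ^ 2 := fun t ht => by
    rw [← pow_rpow_two_div_natCast (hr0 t) hp]
    exact Real.rpow_lt_rpow hβ (hr t (mem_range.1 ht)) (by positivity)
  have hsum : (N : ℝ) * β ^ (2 / p : ℝ) < ∑ t ∈ range N, r t ^ 2 := by
    simpa using sum_lt_sum_of_nonempty (nonempty_range_iff.2 hN.ne') hsq
  have htele : κ * ∑ t ∈ range N, r t ^ 2 ≤ a 0 :=
    calc κ * ∑ t ∈ range N, r t ^ 2 = ∑ t ∈ range N, κ * r t ^ 2 := mul_sum _ _ _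
      _ ≤ ∑ t ∈ range N, (a t - a (t + 1)) := sum_le_sum fun t ht => hdesc t (mem_range.1 ht)
      _ = a 0 - a N := sum_range_sub' a N
      _ ≤ a 0 := by linarith
  have hlt : κ * β ^ (2 / p : ℝ) * N < κ * β ^ (2 / p : ℝ) * X := by
    rw [hX_eq]
    nlinarith
  exact (lt_of_mul_lt_mul_left hlt (by positivity)).le

theorem tensor_rate_constant_identity {p : ℕ} (hp : p ≠ 0) {L M lam σ D : ℝ} (hL : 0 < L)
    (hLM : L < p * M) (hlam : 0 < lam) (hσ : 0 < σ) (hD : 0 ≤ D) :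
    (1 - (L / (p * M)) ^ 2) * (p ! * σ * D / (lam * (1 + σ) * (p * M + L))) ^ (2 / p : ℝ) *
      (lam * ((p : ℝ) ^ p * M ^ p * (1 + σ⁻¹) /
        ((p ! : ℝ) * ((p : ℝ) * M - L) ^ ((p : ℝ) / 2) * ((p : ℝ) * M + L) ^ ((p : ℝ) / 2 - 1))) *
        D ^ (p - 1)) ^ (2 / p : ℝ) = D ^ 2 := by
  have ha : 0 < (p : ℝ) * M - L := by linarith
  have hb : 0 < (p : ℝ) * M + L := by linarith
  have hpR : (0 : ℝ) < p := by exact_mod_cast Nat.pos_of_ne_zero hp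
  have hM : 0 < M := pos_of_mul_pos_right (hL.trans hLM) hpR.le
  set Z := (p * M * D) ^ 2 / ((p * M - L) * (p * M + L)) with hZ
  have hprod : p ! * σ * D / (lam * (1 + σ) * (p * M + L)) *
      (lam * ((p : ℝ) ^ p * M ^ p * (1 + σ⁻¹) /
        ((p ! : ℝ) * ((p : ℝ) * M - L) ^ ((p : ℝ) / 2) * ((p : ℝ) * M + L) ^ ((p : ℝ) / 2 - 1))) *
        D ^ (p - 1)) = Z ^ ((p : ℝ) / 2) := by
    have hsq : ((p * M * D) ^ 2) ^ ((p : ℝ) / 2) = (p * M * D) ^ p := by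
      rw [← Real.rpow_natCast _ 2, ← Real.rpow_mul (by positivity), Nat.cast_two,
        mul_div_cancel₀ _ two_ne_zero, Real.rpow_natCast]
    have hpos_a := Real.rpow_pos_of_pos ha ((p : ℝ) / 2)
    have hpos_b := Real.rpow_pos_of_pos hb ((p : ℝ) / 2)
    rw [Real.div_rpow (by positivity) (by positivity), Real.mul_rpow ha.le hb.le, hsq,
      Real.rpow_sub_one hb.ne']
    obtain ⟨q, rfl⟩ : ∃ q, p = q + 1 := ⟨p - 1, by omega⟩
    rw [show q + 1 - 1 = q from rfl]
    field_simp
    ring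
  rw [mul_assoc, ← Real.mul_rpow (by positivity) (by positivity), hprod,
    ← Real.rpow_mul (by positivity), div_mul_div_cancel₀ (by norm_num), div_self hpR.ne',
    Real.rpow_one, hZ]
  field_simp
  ring

theorem tensor_extragradient_iteration_bound {d : ℕ} (p : ℕ) (hp : 2 ≤ p)
    (A : EuclideanSpace ℝ (Fin d) → ℝ)
    (hA : ContDiff ℝ (p : ℕ∞) A)
    (lam : ℝ) (hlam : 0 < lam)
    (hsc : StrongConvexOn Set.univ (1 / lam) A)
    (L M : ℝ) (hL : 0 < L)
    (hLip : ∀ x y : EuclideanSpace ℝ (Fin d),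
      ‖iteratedFDeriv ℝ p A x - iteratedFDeriv ℝ p A y‖ ≤ L * ‖x - y‖)
    (hM : L ≤ M) (σ : ℝ) (hσ : σ ∈ Set.Ioo (0 : ℝ) 1)
    (xs : EuclideanSpace ℝ (Fin d)) (hmin : IsMinOn A Set.univ xs)
    (x xhalf : ℕ → EuclideanSpace ℝ (Fin d))
    (hhalf : ∀ t, IsMinOn (fun y => taylorApprox p A (x t) y +
      ((p : ℝ) * M / (Nat.factorial (p + 1) : ℝ)) * ‖y - x t‖ ^ (p + 1)) Set.univ (xhalf t))
    (hstep : ∀ t, x (t + 1) = x t -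
      (((M / (Nat.factorial (p - 1) : ℝ)) * ‖xhalf t - x t‖ ^ (p - 1))⁻¹) •
        gradient A (xhalf t))
    (Tk : ℕ) (hTk1 : 1 ≤ Tk)
    -- the stopping condition fails at every iteration before the last one
    (hnotstop : ∀ t, t + 1 < Tk →
      ¬ (‖gradient A (xhalf t)‖ ≤ σ * lam⁻¹ * ‖xhalf t - x 0‖))
    (Cp : ℝ)
    (hCp : Cp = (p : ℝ) ^ p * M ^ p * (1 + σ⁻¹) /
      ((Nat.factorial p : ℝ) * ((p : ℝ) * M - L) ^ ((p : ℝ) / 2) *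
        ((p : ℝ) * M + L) ^ ((p : ℝ) / 2 - 1))) :
    (Tk : ℝ) ≤ (lam * Cp * ‖x 0 - xs‖ ^ (p - 1)) ^ ((2 : ℝ) / (p : ℝ)) + 1 := by
  have hp0 : p ≠ 0 := by omega
  have hM0 : 0 < M := hL.trans_le hM
  have hσ0 : 0 < σ := hσ.1
  have hLpM : L < p * M := by
    have : (2 : ℝ) ≤ p := by exact_mod_cast hp
    nlinarith
  have hAd : Differentiable ℝ A := hA.differentiable (by exact_mod_cast hp0)
  have hkey t := norm_gradient_sub_smul_le_of_isMinOn_taylorApprox hp hA hLip (hhalf t)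
  have hr_lower : ∀ t < Tk - 1,
      p ! * σ * ‖x 0 - xs‖ / (lam * (1 + σ) * (p * M + L)) < ‖xhalf t - x t‖ ^ p :=
    fun t ht => lt_norm_sub_pow_of_stopping_test_fails (by omega) hM0.le hL hlam hσ0 (hkey t)
      (by simpa [one_div] using hsc.mul_norm_sub_le_norm_gradient hAd hmin (xhalf t))
      (lt_of_not_ge (hnotstop t (by omega)))
  have hdesc : ∀ t < Tk - 1, (1 - (L / (p * M)) ^ 2) * ‖xhalf t - x t‖ ^ 2 ≤
      ‖x t - xs‖ ^ 2 - ‖x (t + 1) - xs‖ ^ 2 := fun t _ => by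
    rw [hstep t]
    exact sq_le_sub_of_tensor_step (by omega) hM0 (hkey t) ((by positivity : (0 : ℝ) ≤
      1 / lam * ‖xhalf t - xs‖ ^ 2).trans (hsc.mul_sq_norm_sub_le_inner_gradient hAd hmin _))
  have hκ : 0 < 1 - (L / (p * M)) ^ 2 :=
    sub_pos.2 (pow_lt_one₀ (by positivity) ((div_lt_one (by positivity)).2 hLpM) two_ne_zero)
  have hbase : 0 ≤ lam * Cp * ‖x 0 - xs‖ ^ (p - 1) := by
    have : 0 < (p : ℝ) * M - L := by linarith
    rw [hCp]
    positivity
  have hcount := natCast_le_of_telescoping (a := fun t => ‖x t - xs‖ ^ 2) hp0 hκ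
    (by positivity) (Real.rpow_nonneg hbase _) (fun t => norm_nonneg _) hr_lower hdesc
    (by positivity) (hCp ▸ tensor_rate_constant_identity hp0 hL hLpM hlam hσ0 (norm_nonneg _))
  rw [Nat.cast_sub hTk1, Nat.cast_one] at hcount
  linarith
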